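/- arXiv:1804.03420 — 3 statements merged into one kernel-verified Lean document; each statement's English description precedes it below -/
import Mathlib

section
/- Let X, Y, N be real-valued random variables on a probability space such that N is independent of the pair (X, Y), and let c be a real constant. Then Y and c·X + N are conditionally independent given the σ-algebra generated by X. -/
/-!
For `B ∈ σ(Y)`, `C ∈ σ(X)` and `A ∈ σ(N)`, the tower property through `σ(X, Y)`, which is
independent of `N`, gives `P[B ∩ C ∩ A | X] = P(A) • P[B ∩ C | X] = P[B | X] * P[C ∩ A | X]`.
The sets `C ∩ A` form a π-system generating `σ(X, N)`, so `Y` and `(X, N)` are conditionally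
independent given `X`, and `c * X + N` is a measurable function of `(X, N)`.
-/

open MeasureTheory ProbabilityTheory MeasurableSpace

lemma isPiSystem_image2_inter {α : Type*} {C D : Set (Set α)} (hC : IsPiSystem C)
    (hD : IsPiSystem D) :
    IsPiSystem (Set.image2 (· ∩ ·) C D) := by
  rintro _ ⟨c₁, hc₁, d₁, hd₁, rfl⟩ _ ⟨c₂, hc₂, d₂, hd₂, rfl⟩ hne
  rw [Set.inter_inter_inter_comm] at hne ⊢
  exact ⟨_, hC _ hc₁ _ hc₂ hne.left, _, hD _ hd₁ _ hd₂ hne.right, rfl⟩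

lemma MeasurableSpace.generateFrom_image2_inter_measurableSet {α : Type*}
    (m₁ m₂ : MeasurableSpace α) :
    generateFrom (Set.image2 (· ∩ ·) {s | MeasurableSet[m₁] s} {t | MeasurableSet[m₂] t})
      = m₁ ⊔ m₂ := by
  refine le_antisymm (generateFrom_le ?_) (sup_le ?_ ?_)
  · rintro _ ⟨s, hs, t, ht, rfl⟩
    exact (le_sup_left (b := m₂) _ hs).inter (le_sup_right (a := m₁) _ ht)
  · intro s hs
    exact measurableSet_generateFrom ⟨s, hs, Set.univ, MeasurableSet.univ, Set.inter_univ s⟩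
  · intro t ht
    exact measurableSet_generateFrom ⟨Set.univ, MeasurableSet.univ, t, ht, Set.univ_inter t⟩

namespace ProbabilityTheory

variable {Ω : Type*} {m' m₁ m₂ m₃ mΩ : MeasurableSpace Ω} {μ : Measure Ω} [IsFiniteMeasure μ]

lemma condExp_inter_eq_smul_of_indep (hm'₂ : m' ≤ m₂) (hm₁ : m₁ ≤ mΩ) (hm₂ : m₂ ≤ mΩ)
    (hindep : Indep m₁ m₂ μ) {A D : Set Ω} (hA : MeasurableSet[m₁] A)
    (hD : MeasurableSet[m₂] D) :
    μ⟦A ∩ D | m'⟧ =ᵐ[μ] μ.real A • μ⟦D | m'⟧ := by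
  have hA_const : μ⟦A | m₂⟧ =ᵐ[μ] fun _ ↦ μ.real A := by
    refine (condExp_indep_eq hm₁ hm₂ (stronglyMeasurable_const.indicator hA) hindep).trans ?_
    filter_upwards with ω
    simp [integral_indicator_const _ (hm₁ _ hA)]
  have hAD : μ⟦A ∩ D | m₂⟧ =ᵐ[μ] μ.real A • D.indicator fun _ ↦ (1 : ℝ) := by
    rw [Set.inter_comm, ← Set.indicator_indicator]
    filter_upwards [condExp_indicator ((integrable_const (1 : ℝ)).indicator (hm₁ _ hA)) hD,
      hA_const] with ω hω hω_const
    by_cases hωD : ω ∈ D <;> simp [hω, hω_const, hωD]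
  calc μ⟦A ∩ D | m'⟧ =ᵐ[μ] μ[μ⟦A ∩ D | m₂⟧ | m'] := (condExp_condExp_of_le hm'₂ hm₂).symm
    _ =ᵐ[μ] μ[μ.real A • D.indicator fun _ ↦ (1 : ℝ) | m'] := condExp_congr_ae hAD
    _ =ᵐ[μ] μ.real A • μ⟦D | m'⟧ := condExp_smul _ _ _

variable [StandardBorelSpace Ω]

lemma condIndep_self_left (hm' : m' ≤ mΩ) (hm₁ : m₁ ≤ mΩ) : CondIndep m' m' m₁ hm' μ := by
  have h := condIndepFun_of_measurable_left (mβ := m') (mβ' := m₁) (hm' := hm') (μ := μ)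
    (X := id) (Y := id) (@measurable_id Ω m') (measurable_id'' hm₁)
  simpa only [CondIndep, CondIndepFun, Kernel.IndepFun, MeasurableSpace.comap_id] using h

theorem condIndep_sup_of_indep (hm'₂ : m' ≤ m₂) (hm₁₂ : m₁ ≤ m₂) (hm₂ : m₂ ≤ mΩ)
    (hm₃ : m₃ ≤ mΩ) (hindep : Indep m₃ m₂ μ) :
    CondIndep m' m₁ (m' ⊔ m₃) (hm'₂.trans hm₂) μ := by
  have hm' : m' ≤ mΩ := hm'₂.trans hm₂
  have hm₁ : m₁ ≤ mΩ := hm₁₂.trans hm₂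
  have hp₁ : ∀ s ∈ {s | MeasurableSet[m₁] s}, MeasurableSet s := fun s hs ↦ hm₁ s hs
  have hp₂ : ∀ s ∈ Set.image2 (· ∩ ·) {s | MeasurableSet[m'] s} {t | MeasurableSet[m₃] t},
      MeasurableSet s := by
    rintro _ ⟨s, hs, t, ht, rfl⟩
    exact (hm' s hs).inter (hm₃ t ht)
  rw [← generateFrom_image2_inter_measurableSet, ← @generateFrom_measurableSet Ω m₁]
  refine CondIndepSets.condIndep' hp₁ hp₂ (@isPiSystem_measurableSet Ω m₁)
    (isPiSystem_image2_inter (@isPiSystem_measurableSet Ω m') (@isPiSystem_measurableSet Ω m₃))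
    ((condIndepSets_iff _ _ _ _ hp₁ hp₂ μ).2 ?_)
  rintro B _ hB ⟨C, hC, A, hA, rfl⟩
  have hCB := (condIndep_iff _ _ _ hm' hm' hm₁ μ).1 (condIndep_self_left hm' hm₁) C B hC hB
  calc μ⟦B ∩ (C ∩ A) | m'⟧ = μ⟦A ∩ (C ∩ B) | m'⟧ := by
        rw [show B ∩ (C ∩ A) = A ∩ (C ∩ B) by ac_rfl]
    _ =ᵐ[μ] μ.real A • μ⟦C ∩ B | m'⟧ :=
        condExp_inter_eq_smul_of_indep hm'₂ hm₃ hm₂ hindep hA ((hm'₂ _ hC).inter (hm₁₂ _ hB))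
    _ =ᵐ[μ] μ.real A • (μ⟦C | m'⟧ * μ⟦B | m'⟧) := hCB.const_smul _
    _ = μ⟦B | m'⟧ * (μ.real A • μ⟦C | m'⟧) := by
        rw [mul_comm, mul_smul_comm]
    _ =ᵐ[μ] μ⟦B | m'⟧ * μ⟦A ∩ C | m'⟧ :=
        Filter.EventuallyEq.rfl.mul
          (condExp_inter_eq_smul_of_indep hm'₂ hm₃ hm₂ hindep hA (hm'₂ _ hC)).symm
    _ = μ⟦B | m'⟧ * μ⟦C ∩ A | m'⟧ := by rw [Set.inter_comm]

lemma condIndepFun_prodMk_of_indepFun {β γ δ : Type*} [MeasurableSpace β] [MeasurableSpace γ]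
    [MeasurableSpace δ] {X : Ω → β} {Y : Ω → γ} {N : Ω → δ} (hX : Measurable X)
    (hY : Measurable Y) (hN : Measurable N) (hindep : IndepFun N (fun ω ↦ (X ω, Y ω)) μ) :
    CondIndepFun (MeasurableSpace.comap X inferInstance) hX.comap_le Y (fun ω ↦ (X ω, N ω)) μ := by
  have hXY : MeasurableSpace.comap (fun ω ↦ (X ω, Y ω)) inferInstance
      = MeasurableSpace.comap X inferInstance ⊔ MeasurableSpace.comap Y inferInstance :=
    comap_prodMk X Y
  have hXN : MeasurableSpace.comap (fun ω ↦ (X ω, N ω)) inferInstance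
      = MeasurableSpace.comap X inferInstance ⊔ MeasurableSpace.comap N inferInstance :=
    comap_prodMk X N
  rw [IndepFun_iff_Indep, hXY] at hindep
  rw [condIndepFun_iff_condIndep, hXN]
  exact condIndep_sup_of_indep le_sup_left le_sup_right (sup_le hX.comap_le hY.comap_le)
    hN.comap_le hindep

end ProbabilityTheory

/-- Markov-chain step used in the converse of the sum-rate-distortion theorem: if the
innovation `N` is independent of the pair `(X, Y)`, then `Y` and `c·X + N` are conditionally
independent given the σ-algebra generated by `X`. -/
theorem markov_step_condIndep
    {Ω : Type*} [MeasurableSpace Ω] [StandardBorelSpace Ω]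
    (P : Measure Ω) [IsProbabilityMeasure P]
    (X Y N : Ω → ℝ) (hX : Measurable X) (hY : Measurable Y) (hN : Measurable N)
    (hIndep : IndepFun N (fun ω => (X ω, Y ω)) P) (c : ℝ) :
    CondIndepFun (MeasurableSpace.comap X inferInstance) (hX.comap_le) Y
      (fun ω => c * X ω + N ω) P :=
  (condIndepFun_prodMk_of_indepFun hX hY hN hIndep).comp measurable_id
    (by fun_prop : Measurable fun p : ℝ × ℝ ↦ c * p.1 + p.2)
end

section
/- Let t, k be natural numbers with 1 ≤ k < t, let ρ be a real, D a nonnegative real, and (σ_s) positive reals. Let X̂, together with N_{t−k+1}, …, N_t, be random variables on a probability space such that Z := X_{t−k} − X̂ and the innovations N_{t−k+1}, …, N_t are square-integrable with mean zero, the family {Z, N_{t−k+1}, …, N_t} is mutually independent, E[Z²] = D, E[N_s²] = (1−ρ²)·σ_s² for t−k+1 ≤ s ≤ t, and the sources satisfy the recursion X_{s+1} = ρ·(σ_{s+1}/σ_s)·X_s + N_{s+1} for t−k ≤ s ≤ t−1. Then the k-step predictor X̃ := ρ^k·(σ_t/σ_{t−k})·X̂ achieves mean-squared error E[(X_t − X̃)²]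 = ρ^{2k}·(σ_t²/σ_{t−k}²)·D + (1−ρ^{2k})·σ_t². -/
/-!
Unrolling the recursion `k` times writes the prediction error `X_t - X̃` as
`ρ^k (σ_t/σ_{t-k}) Z + ∑_{j<k} ρ^(k-1-j) (σ_t/σ_{t-k+1+j}) N_{t-k+1+j}`,
a linear combination of independent zero-mean variables. Its second moment is therefore the sum
of the squared coefficients times the second moments, and the innovation terms add up to the
geometric sum `(1-ρ²) σ_t² ∑_{j<k} ρ^(2j) = (1-ρ^(2k)) σ_t²`.
-/

open MeasureTheory ProbabilityTheory Finset

lemma ar_one_unroll {R : Type*} [CommRing R] {y m : ℕ → R} {ρ : R} (a k : ℕ)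
    (hrec : ∀ s, a ≤ s → s < a + k → y (s + 1) = ρ * y s + m (s + 1)) :
    y (a + k) = ρ ^ k * y a + ∑ i ∈ range k, ρ ^ (k - 1 - i) * m (a + 1 + i) := by
  induction k with
  | zero => simp
  | succ k ih =>
    rw [← add_assoc, hrec (a + k) (by omega) (by omega),
      ih fun s has hs => hrec s has (by omega), sum_range_succ, mul_add, mul_sum]
    have hpow : ∀ i ∈ range k, ρ * (ρ ^ (k - 1 - i) * m (a + 1 + i)) =
        ρ ^ (k + 1 - 1 - i) * m (a + 1 + i) := fun i hi => by
      rw [show k + 1 - 1 - i = k - 1 - i + 1 by grind, pow_succ]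
      ring
    rw [sum_congr rfl hpow, Nat.add_sub_cancel, Nat.sub_self, pow_zero, one_mul,
      add_right_comm a 1 k]
    ring

lemma scaled_ar_one_unroll {x n σ : ℕ → ℝ} {ρ : ℝ} (hσ : ∀ s, σ s ≠ 0) (a k : ℕ)
    (hrec : ∀ s, a ≤ s → s < a + k →
      x (s + 1) = ρ * (σ (s + 1) / σ s) * x s + n (s + 1)) :
    x (a + k) = ρ ^ k * (σ (a + k) / σ a) * x a +
      ∑ i ∈ range k, ρ ^ (k - 1 - i) * (σ (a + k) / σ (a + 1 + i)) * n (a + 1 + i) := by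
  have hnorm := ar_one_unroll (y := fun s => x s / σ s) (m := fun s => n s / σ s) (ρ := ρ) a k
    fun s has hs => by
      rw [hrec s has hs]
      field_simp [hσ s, hσ (s + 1)]
  rw [div_eq_iff (hσ _)] at hnorm
  rw [hnorm, add_mul, sum_mul]
  congr 1
  · field_simp [hσ a]
  · refine sum_congr rfl fun i _ => ?_
    field_simp [hσ (a + 1 + i)]

lemma one_sub_mul_sum_range_pow_reflect {R : Type*} [CommRing R] (x : R) (n : ℕ) :
    (1 - x) * ∑ i ∈ range n, x ^ (n - 1 - i) = 1 - x ^ n := by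
  rw [← sum_range_reflect (fun i => x ^ (n - 1 - i)), ← mul_neg_geom_sum]
  congr 1
  refine sum_congr rfl fun i hi => ?_
  rw [mem_range] at hi
  congr 1
  omega

lemma integral_sq_sum_const_mul_of_pairwise_indepFun {Ω ι : Type*} [MeasurableSpace Ω]
    {P : Measure Ω} [IsFiniteMeasure P] [Fintype ι] {Y : ι → Ω → ℝ} (c : ι → ℝ)
    (hL2 : ∀ i, MemLp (Y i) 2 P) (hmean : ∀ i, ∫ ω, Y i ω ∂P = 0)
    (hindep : Pairwise fun i j => IndepFun (Y i) (Y j) P) :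
    ∫ ω, (∑ i, c i * Y i ω) ^ 2 ∂P = ∑ i, c i ^ 2 * ∫ ω, Y i ω ^ 2 ∂P := by
  set W : ι → Ω → ℝ := fun i ω => c i * Y i ω
  have hWL2 : ∀ i, MemLp (W i) 2 P := fun i => (hL2 i).const_mul (c i)
  have hWmean : ∀ i, ∫ ω, W i ω ∂P = 0 := fun i => by
    simp only [W, integral_const_mul, hmean i, mul_zero]
  have hsum_mean : ∫ ω, (∑ i, W i) ω ∂P = 0 := by
    simp only [Finset.sum_apply]
    rw [integral_finsetSum _ fun i _ => (hWL2 i).integrable one_le_two]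
    simp [hWmean]
  calc ∫ ω, (∑ i, W i ω) ^ 2 ∂P
      = variance (∑ i, W i) P := by
        rw [variance_of_integral_eq_zero (memLp_finsetSum' _ fun i _ => hWL2 i).aemeasurable
          hsum_mean]
        simp only [Finset.sum_apply]
    _ = ∑ i, variance (W i) P :=
        IndepFun.variance_sum (fun i _ => hWL2 i) fun i _ j _ hij =>
          (hindep hij).comp (measurable_const_mul (c i)) (measurable_const_mul (c j))
    _ = ∑ i, c i ^ 2 * ∫ ω, Y i ω ^ 2 ∂P := by
        refine sum_congr rfl fun i _ => ?_
        rw [variance_const_mul, variance_of_integral_eq_zero (hL2 i).aemeasurable (hmean i)]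

lemma integral_sq_const_mul_add_sum_of_iIndepFun {Ω : Type*} [MeasurableSpace Ω]
    {P : Measure Ω} [IsFiniteMeasure P] {k : ℕ} {Z : Ω → ℝ} {N : Fin k → Ω → ℝ}
    (c₀ : ℝ) (c : Fin k → ℝ) (hZL2 : MemLp Z 2 P) (hNL2 : ∀ j, MemLp (N j) 2 P)
    (hZmean : ∫ ω, Z ω ∂P = 0) (hNmean : ∀ j, ∫ ω, N j ω ∂P = 0)
    (hindep : iIndepFun (Fin.cons Z N : Fin (k + 1) → Ω → ℝ) P) :
    ∫ ω, (c₀ * Z ω + ∑ j, c j * N j ω) ^ 2 ∂P =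
      c₀ ^ 2 * ∫ ω, Z ω ^ 2 ∂P + ∑ j, c j ^ 2 * ∫ ω, N j ω ^ 2 ∂P := by
  simpa [Fin.sum_univ_succ] using integral_sq_sum_const_mul_of_pairwise_indepFun (Fin.cons c₀ c)
    (Fin.cases hZL2 hNL2) (Fin.cases hZmean hNmean) fun i j hij => hindep.indepFun hij

theorem k_step_predictor_mse_general
    {Ω : Type*} [MeasurableSpace Ω] (P : Measure Ω) [IsProbabilityMeasure P]
    (t k : ℕ) (hkt : k < t) (ρ D : ℝ)
    (σ : ℕ → ℝ) (hσ : ∀ s, 0 < σ s)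
    (Xhat : Ω → ℝ) (X N : ℕ → Ω → ℝ)
    (Z : Ω → ℝ) (hZ : Z = fun ω => X (t - k) ω - Xhat ω)
    (hZL2 : MemLp Z 2 P) (hNL2 : ∀ s, t - k + 1 ≤ s → s ≤ t → MemLp (N s) 2 P)
    (hZmean : ∫ ω, Z ω ∂P = 0)
    (hNmean : ∀ s, t - k + 1 ≤ s → s ≤ t → ∫ ω, N s ω ∂P = 0)
    (hIndep : iIndepFun
      (Fin.cons Z (fun j : Fin k => N (t - k + 1 + j.1)) : Fin (k + 1) → Ω → ℝ) P)
    (hZvar : ∫ ω, Z ω ^ 2 ∂P = D)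
    (hNvar : ∀ s, t - k + 1 ≤ s → s ≤ t → ∫ ω, N s ω ^ 2 ∂P = (1 - ρ ^ 2) * σ s ^ 2)
    (hrec : ∀ s, t - k ≤ s → s < t →
      X (s + 1) = fun ω => ρ * (σ (s + 1) / σ s) * X s ω + N (s + 1) ω) :
    ∫ ω, (X t ω - ρ ^ k * (σ t / σ (t - k)) * Xhat ω) ^ 2 ∂P =
      ρ ^ (2 * k) * (σ t ^ 2 / σ (t - k) ^ 2) * D + (1 - ρ ^ (2 * k)) * σ t ^ 2 := by
  set a := t - k
  have hat : a + k = t := Nat.sub_add_cancel hkt.le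
  have hσne : ∀ s, σ s ≠ 0 := fun s => (hσ s).ne'
  have hN : ∀ j : Fin k, a + 1 ≤ a + 1 + j.1 ∧ a + 1 + j.1 ≤ t := fun j => by omega
  set c : ℕ → ℝ := fun i => ρ ^ (k - 1 - i) * (σ t / σ (a + 1 + i))
  have herror : ∀ ω, X t ω - ρ ^ k * (σ t / σ a) * Xhat ω =
      ρ ^ k * (σ t / σ a) * Z ω + ∑ j : Fin k, c j * N (a + 1 + j) ω := fun ω => by
    have hX := scaled_ar_one_unroll (x := fun s => X s ω) (n := fun s => N s ω) hσne a k
      fun s has hs => congrFun (hrec s has (hat ▸ hs)) ω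
    rw [hat] at hX
    rw [Fin.sum_univ_eq_sum_range (fun i => c i * N (a + 1 + i) ω), hX, hZ]
    ring
  have hterm : ∀ j : Fin k, c j ^ 2 * ∫ ω, N (a + 1 + j) ω ^ 2 ∂P =
      σ t ^ 2 * ((1 - ρ ^ 2) * (ρ ^ 2) ^ (k - 1 - j.1)) := fun j => by
    rw [hNvar _ (hN j).1 (hN j).2]
    simp only [c]
    field_simp [hσne (a + 1 + j.1)]
    ring
  rw [integral_congr_ae (.of_forall fun ω => congrArg (· ^ 2) (herror ω)),
    integral_sq_const_mul_add_sum_of_iIndepFun _ _ hZL2 (fun j => hNL2 _ (hN j).1 (hN j).2)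
      hZmean (fun j => hNmean _ (hN j).1 (hN j).2) hIndep,
    hZvar, sum_congr rfl fun j _ => hterm j, ← mul_sum, ← mul_sum,
    Fin.sum_univ_eq_sum_range (fun i => (ρ ^ 2) ^ (k - 1 - i)), one_sub_mul_sum_range_pow_reflect]
  field_simp [hσne a]
  ring

/-- Corollary 1 (distortion of the k-step predictor): if the reconstruction `X̂` of frame
`t-k` has zero-mean reconstruction error `Z = X_{t-k} - X̂` with `E[Z²] = D`, the innovations
`N_s` are zero-mean with `E[N_s²] = (1-ρ²)σ_s²`, the family `{Z, N_{t-k+1}, …, N_t}` is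
mutually independent, and the sources satisfy `X_{s+1} = ρ (σ_{s+1}/σ_s) X_s + N_{s+1}`, then
the k-step predictor `X̃ = ρ^k (σ_t/σ_{t-k}) X̂` achieves
`E[(X_t - X̃)²] = ρ^{2k} (σ_t²/σ_{t-k}²) D + (1-ρ^{2k}) σ_t²`. -/
theorem k_step_predictor_mse
    {Ω : Type*} [MeasurableSpace Ω] (P : Measure Ω) [IsProbabilityMeasure P]
    (t k : ℕ) (hk1 : 1 ≤ k) (hkt : k < t) (ρ D : ℝ) (hD : 0 ≤ D)
    (σ : ℕ → ℝ) (hσ : ∀ s, 0 < σ s)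
    (Xhat : Ω → ℝ) (X N : ℕ → Ω → ℝ)
    (Z : Ω → ℝ) (hZ : Z = fun ω => X (t - k) ω - Xhat ω)
    (hZL2 : MemLp Z 2 P) (hNL2 : ∀ s, t - k + 1 ≤ s → s ≤ t → MemLp (N s) 2 P)
    (hZmean : ∫ ω, Z ω ∂P = 0)
    (hNmean : ∀ s, t - k + 1 ≤ s → s ≤ t → ∫ ω, N s ω ∂P = 0)
    (hIndep : iIndepFun
      (Fin.cons Z (fun j : Fin k => N (t - k + 1 + j.1)) : Fin (k + 1) → Ω → ℝ) P)
    (hZvar : ∫ ω, Z ω ^ 2 ∂P = D)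
    (hNvar : ∀ s, t - k + 1 ≤ s → s ≤ t → ∫ ω, N s ω ^ 2 ∂P = (1 - ρ ^ 2) * σ s ^ 2)
    (hrec : ∀ s, t - k ≤ s → s < t →
      X (s + 1) = fun ω => ρ * (σ (s + 1) / σ s) * X s ω + N (s + 1) ω) :
    ∫ ω, (X t ω - ρ ^ k * (σ t / σ (t - k)) * Xhat ω) ^ 2 ∂P =
      ρ ^ (2 * k) * (σ t ^ 2 / σ (t - k) ^ 2) * D + (1 - ρ ^ (2 * k)) * σ t ^ 2 :=
  k_step_predictor_mse_general P t k hkt ρ D σ hσ Xhat X N Z hZ hZL2 hNL2 hZmean hNmean hIndep hZvar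
    hNvar hrec
end

section
/- Let k be a natural number, ρ a real, D a real, and σ : ℕ → ℝ with σ_j > 0 for all j ≤ k. Let v : ℕ → ℝ satisfy v 0 = (σ_0²)⁻¹·σ_0²·D (i.e., v 0 = D) and the one-step DPCM error-variance recursion v_{j+1} = ρ²·(σ_{j+1}²/σ_j²)·v_j + (1−ρ²)·σ_{j+1}² for all j < k. Then v_k = ρ^{2k}·(σ_k²/σ_0²)·D + (1−ρ^{2k})·σ_k². -/
/-! Dividing the error variance of frame `j` by `σ_j²` turns the DPCM recursion into the affine
recursion `w_{j+1} = ρ² w_j + (1 - ρ²)`, whose fixed point is `1`; hence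
`w_k - 1 = ρ^{2k} (w_0 - 1)` with `w_0 = D / σ_0²`, and multiplying back by `σ_k²` gives the
closed form. -/

theorem affine_recurrence_closed_form {R : Type*} [CommRing R] (a c : R) (w : ℕ → R) (k : ℕ)
    (h : ∀ j < k, w (j + 1) = a * w j + (1 - a) * c) :
    w k = a ^ k * w 0 + (1 - a ^ k) * c := by
  induction k with
  | zero => simp
  | succ n ih =>
    rw [h n n.lt_succ_self, ih fun j hj => h j (hj.trans n.lt_succ_self)]
    ring

theorem dpcm_step_div_sq {K : Type*} [Field K] {ρ s t x y : K} (ht : t ≠ 0)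
    (h : y = ρ ^ 2 * (t ^ 2 / s ^ 2) * x + (1 - ρ ^ 2) * t ^ 2) :
    y / t ^ 2 = ρ ^ 2 * (x / s ^ 2) + (1 - ρ ^ 2) * 1 := by
  rw [h]
  field_simp

/-- Closed form for the iterated one-step DPCM error-variance recursion: if `v 0 = D` and
`v_{j+1} = ρ² (σ_{j+1}²/σ_j²) v_j + (1-ρ²) σ_{j+1}²` for `j < k`, then
`v k = ρ^{2k} (σ_k²/σ_0²) D + (1-ρ^{2k}) σ_k²`. -/
theorem dpcm_error_variance_closed_form
    (k : ℕ) (ρ D : ℝ) (σ : ℕ → ℝ) (hσ : ∀ j, j ≤ k → 0 < σ j)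
    (v : ℕ → ℝ)
    (hv0 : v 0 = (σ 0 ^ 2)⁻¹ * σ 0 ^ 2 * D)
    (hrec : ∀ j, j < k →
      v (j + 1) = ρ ^ 2 * (σ (j + 1) ^ 2 / σ j ^ 2) * v j + (1 - ρ ^ 2) * σ (j + 1) ^ 2) :
    v k = ρ ^ (2 * k) * (σ k ^ 2 / σ 0 ^ 2) * D + (1 - ρ ^ (2 * k)) * σ k ^ 2 := by
  have hσ0 : σ 0 ^ 2 ≠ 0 := pow_ne_zero 2 (hσ 0 k.zero_le).ne'
  have hw := affine_recurrence_closed_form (ρ ^ 2) 1 (fun j => v j / σ j ^ 2) k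
    fun j hj => dpcm_step_div_sq (hσ (j + 1) hj).ne' (hrec j hj)
  rw [hv0, inv_mul_cancel₀ hσ0, one_mul, ← pow_mul] at hw
  have hσk : σ k ^ 2 ≠ 0 := pow_ne_zero 2 (hσ k le_rfl).ne'
  calc v k = σ k ^ 2 * (v k / σ k ^ 2) := (mul_div_cancel₀ _ hσk).symm
    _ = ρ ^ (2 * k) * (σ k ^ 2 / σ 0 ^ 2) * D + (1 - ρ ^ (2 * k)) * σ k ^ 2 := by rw [hw]; ring
end
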